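/- arXiv:2512.22037 — 3 statements merged into one kernel-verified Lean document; each statement's English description precedes it below -/
import Mathlib

section
/- (Gauss sum evaluation.) Let a, b ∈ ℤ and q ∈ ℕ with q ≥ 1, and define the quadratic Gauss sum G(a,b;q) = Σ_{ℓ=1}^{q} e^{i(2πℓ b/q + 2πℓ² a/q)}. If gcd(a,q) = 1, q ≡ 0 (mod 4) and b ≡ 0 (mod 2), then |G(a,b;q)| = (2q)^{1/2}. -/
noncomputable section

open scoped BigOperators

lemma aux_conj_stdAddChar {q : ℕ} [NeZero q] (y : ZMod q) :
    (starRingEnd ℂ) (ZMod.stdAddChar y) = ZMod.stdAddChar (-y) := by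
  have h1 : ZMod.stdAddChar y * (starRingEnd ℂ) (ZMod.stdAddChar y) = 1 := by
    rw [Complex.mul_conj]
    rw [ZMod.stdAddChar_apply]
    exact_mod_cast Circle.normSq_coe _
  have h2 : ZMod.stdAddChar y * ZMod.stdAddChar (-y) = 1 := by
    rw [← AddChar.map_add_eq_mul, add_neg_cancel, AddChar.map_zero_eq_one]
  have hne : ZMod.stdAddChar y ≠ 0 := by
    intro h
    rw [h, zero_mul] at h2
    exact one_ne_zero h2.symm
  rw [← h2] at h1
  exact mul_left_cancel₀ hne h1

lemma aux_sum_Icc {q : ℕ} [NeZero q] (hq : 1 ≤ q) (g : ZMod q → ℂ) :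
    ∑ ℓ ∈ Finset.Icc 1 q, g ((ℓ : ℕ) : ZMod q) = ∑ x : ZMod q, g x := by
  refine Finset.sum_nbij' (fun ℓ => ((ℓ : ℕ) : ZMod q))
    (fun x => if x = 0 then q else x.val) ?_ ?_ ?_ ?_ ?_
  · intro ℓ _; exact Finset.mem_univ _
  · intro x _
    split_ifs with h
    · exact Finset.mem_Icc.mpr ⟨hq, le_refl q⟩
    · refine Finset.mem_Icc.mpr ⟨?_, le_of_lt (ZMod.val_lt x)⟩
      have : x.val ≠ 0 := fun hv => h (by rwa [ZMod.val_eq_zero] at hv)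
      omega
  · intro ℓ hℓ
    rw [Finset.mem_Icc] at hℓ
    by_cases h : ℓ = q
    · simp [h, ZMod.natCast_self]
    · have hlt : ℓ < q := lt_of_le_of_ne hℓ.2 h
      have hval : ((ℓ : ZMod q)).val = ℓ := ZMod.val_cast_of_lt hlt
      have hne : ((ℓ : ℕ) : ZMod q) ≠ 0 := by
        intro hz
        rw [hz, ZMod.val_zero] at hval
        omega
      simp [hne, hval]
  · intro x _
    split_ifs with h
    · simp [h, ZMod.natCast_self]
    · exact ZMod.natCast_zmod_val x
  · intro ℓ _; rfl

/-- Gauss sum evaluation: for `gcd(a,q) = 1`, `4 ∣ q` and `b` even, the quadratic Gauss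
sum `G(a,b;q) = ∑_{ℓ=1}^q e^{i(2πℓb/q + 2πℓ²a/q)}` has modulus `√(2q)`. -/
theorem gauss_sum_evaluation (a b : ℤ) (q : ℕ) (hq : 1 ≤ q)
    (hgcd : Int.gcd a (q : ℤ) = 1) (h4 : q % 4 = 0) (h2 : b % 2 = 0) :
    ‖∑ ℓ ∈ Finset.Icc 1 q,
        Complex.exp (Complex.I *
          (((2 * Real.pi * (ℓ : ℝ) * (b : ℝ) / (q : ℝ) +
              2 * Real.pi * (ℓ : ℝ) ^ 2 * (a : ℝ) / (q : ℝ) : ℝ)) : ℂ))‖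
      = Real.sqrt (2 * (q : ℝ)) := by
  classical
  haveI : NeZero q := ⟨by omega⟩
  obtain ⟨k, hk⟩ : 4 ∣ q := Nat.dvd_of_mod_eq_zero h4
  have hk1 : 1 ≤ k := by omega
  obtain ⟨c, hc⟩ : ∃ c : ℤ, b = 2 * c := ⟨b / 2, by omega⟩
  set ψ := ZMod.stdAddChar (N := q) with hψ
  set F : ZMod q → ZMod q := fun x => (a : ZMod q) * x ^ 2 + (b : ZMod q) * x with hF
  set S := ∑ x : ZMod q, ψ (F x) with hS
  set m : ZMod q := ((q / 2 : ℕ) : ZMod q) with hm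
  -- Step 1: the sum equals S
  have hstep1 : ∑ ℓ ∈ Finset.Icc 1 q,
      Complex.exp (Complex.I *
        (((2 * Real.pi * (ℓ : ℝ) * (b : ℝ) / (q : ℝ) +
            2 * Real.pi * (ℓ : ℝ) ^ 2 * (a : ℝ) / (q : ℝ) : ℝ)) : ℂ)) = S := by
    rw [hS, ← aux_sum_Icc hq (fun x => ψ (F x))]
    refine Finset.sum_congr rfl fun ℓ _ => ?_
    have h1 : F ((ℓ : ℕ) : ZMod q) = ((b * ℓ + a * ℓ ^ 2 : ℤ) : ZMod q) := by
      rw [hF]; push_cast; ring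
    rw [h1, hψ, ZMod.stdAddChar_coe]
    congr 1
    push_cast
    ring
  -- units and the kernel of multiplication by 2
  have haunit : IsUnit ((a : ℤ) : ZMod q) := by
    have hco : Nat.Coprime a.natAbs q := by
      rwa [Int.gcd, Int.natAbs_natCast] at hgcd
    have h1 : IsUnit ((a.natAbs : ℕ) : ZMod q) :=
      ⟨ZMod.unitOfCoprime a.natAbs hco, ZMod.coe_unitOfCoprime a.natAbs hco⟩
    rcases Int.natAbs_eq a with h | h
    · rw [h, Int.cast_natCast]; exact h1
    · rw [h, Int.cast_neg, Int.cast_natCast]; exact h1.neg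
  have hmne : m ≠ 0 := by
    rw [hm, Ne, ZMod.natCast_eq_zero_iff]
    intro hd
    have := Nat.le_of_dvd (by omega) hd
    omega
  have hcond : ∀ h : ZMod q, 2 * (a : ZMod q) * h = 0 ↔ h = 0 ∨ h = m := by
    intro h
    have h2h : 2 * (a : ZMod q) * h = (a : ZMod q) * (2 * h) := by ring
    rw [h2h, haunit.mul_right_eq_zero]
    constructor
    · intro h0
      have hval : ((2 * h.val : ℕ) : ZMod q) = 0 := by
        push_cast
        rw [ZMod.natCast_zmod_val]
        exact h0
      rw [ZMod.natCast_eq_zero_iff] at hval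
      obtain ⟨d, hd⟩ := hval
      have hvlt : h.val < q := ZMod.val_lt h
      have hdlt : q * d < q * 2 := by omega
      have : d = 0 ∨ d = 1 := by
        have := Nat.lt_of_mul_lt_mul_left hdlt
        omega
      rcases this with rfl | rfl
      · left
        have : h.val = 0 := by omega
        rw [← ZMod.natCast_zmod_val h, this, Nat.cast_zero]
      · right
        have : h.val = q / 2 := by
          rw [mul_one] at hd
          omega
        rw [← ZMod.natCast_zmod_val h, this, hm]
    · rintro (rfl | rfl)
      · rw [mul_zero]
      · rw [hm, ← Nat.cast_ofNat, ← Nat.cast_mul]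
        have : 2 * (q / 2) = q := by omega
        rw [this, ZMod.natCast_self]
  -- key values
  have hF0 : ψ (F 0) = 1 := by
    rw [hF]; simp
  have hFm : ψ (F m) = 1 := by
    have hm2 : m ^ 2 = 0 := by
      rw [hm, ← Nat.cast_pow, ZMod.natCast_eq_zero_iff]
      refine ⟨k, ?_⟩
      have h1 : q / 2 = 2 * k := by omega
      rw [h1, hk]
      ring
    have hbm : (b : ZMod q) * m = 0 := by
      have h2m : (2 : ZMod q) * m = 0 := by
        rw [hm, ← Nat.cast_ofNat, ← Nat.cast_mul]
        have : 2 * (q / 2) = q := by omega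
        rw [this, ZMod.natCast_self]
      calc (b : ZMod q) * m = (c : ZMod q) * ((2 : ZMod q) * m) := by
            rw [hc]; push_cast; ring
        _ = 0 := by rw [h2m, mul_zero]
    rw [hF]
    dsimp only
    rw [hm2, hbm, mul_zero, add_zero, AddChar.map_zero_eq_one]
  -- Step 2 : |S|^2 = 2q
  have hmul : S * (starRingEnd ℂ) S = 2 * (q : ℂ) := by
    rw [hS, map_sum, Finset.sum_mul_sum]
    have e1 : ∀ x y : ZMod q, ψ (F x) * (starRingEnd ℂ) (ψ (F y)) = ψ (F x - F y) := by
      intro x y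
      rw [hψ, aux_conj_stdAddChar, ← AddChar.map_add_eq_mul, sub_eq_add_neg]
    simp_rw [e1]
    rw [Finset.sum_comm]
    have e2 : ∀ y : ZMod q, ∑ x : ZMod q, ψ (F x - F y)
        = ∑ h : ZMod q, ψ ((a : ZMod q) * h ^ 2 + (b : ZMod q) * h) *
            ψ (y * (2 * (a : ZMod q) * h)) := by
      intro y
      refine (Fintype.sum_equiv (Equiv.addLeft y)
        (fun h => ψ ((a : ZMod q) * h ^ 2 + (b : ZMod q) * h) *
          ψ (y * (2 * (a : ZMod q) * h)))
        (fun x => ψ (F x - F y)) (fun h => ?_)).symm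
      show ψ ((a : ZMod q) * h ^ 2 + (b : ZMod q) * h) *
          ψ (y * (2 * (a : ZMod q) * h)) = ψ (F (y + h) - F y)
      rw [← AddChar.map_add_eq_mul]
      congr 1
      simp only [hF]
      ring
    simp_rw [e2]
    rw [Finset.sum_comm]
    have e3 : ∀ h : ZMod q,
        ∑ y : ZMod q, ψ ((a : ZMod q) * h ^ 2 + (b : ZMod q) * h) *
            ψ (y * (2 * (a : ZMod q) * h))
        = ψ ((a : ZMod q) * h ^ 2 + (b : ZMod q) * h) *
            (if 2 * (a : ZMod q) * h = 0 then (q : ℂ) else 0) := by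
      intro h
      rw [← Finset.mul_sum, hψ,
        AddChar.sum_mulShift _ (ZMod.isPrimitive_stdAddChar q)]
      congr 1
      simp [ZMod.card]
    simp_rw [e3]
    have e4 : ∀ h : ZMod q,
        ψ ((a : ZMod q) * h ^ 2 + (b : ZMod q) * h) *
          (if 2 * (a : ZMod q) * h = 0 then (q : ℂ) else 0)
        = if h ∈ ({0, m} : Finset (ZMod q)) then
            ψ ((a : ZMod q) * h ^ 2 + (b : ZMod q) * h) * (q : ℂ) else 0 := by
      intro h
      by_cases hcase : 2 * (a : ZMod q) * h = 0
      · rw [if_pos hcase, if_pos (by simpa using (hcond h).mp hcase)]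
      · rw [if_neg hcase, if_neg (by
          simp only [Finset.mem_insert, Finset.mem_singleton]
          exact fun hmem => hcase ((hcond h).mpr hmem)), mul_zero]
    simp_rw [e4]
    rw [Finset.sum_ite_mem, Finset.univ_inter,
      Finset.sum_pair (Ne.symm hmne)]
    have hv0 : ψ ((a : ZMod q) * 0 ^ 2 + (b : ZMod q) * 0) = 1 := by
      simp [hF]
    have hvm : ψ ((a : ZMod q) * m ^ 2 + (b : ZMod q) * m) = 1 := by
      simpa [hF] using hFm
    rw [hv0, hvm]
    ring
  rw [hstep1]
  have hnormSq : Complex.normSq S = 2 * (q : ℝ) := by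
    have h1 : ((Complex.normSq S : ℝ) : ℂ) = 2 * (q : ℂ) := by
      rw [← Complex.mul_conj]; exact hmul
    exact_mod_cast h1
  rw [Complex.norm_def, hnormSq]

end
end

section
/- (Lower bound for scaled unions of cubes.) Let d ≥ 2 and let B_1, …, B_n be finitely many axis-parallel cubes in ℝ^{d−1}. For a constant 0 < c < 1, let B_j* denote the cube with the same center as B_j and side length scaled by the factor c. Then the Lebesgue measures satisfy | ⋃_j B_j* | ≥ c^{d−1} · 3^{1−d} · | ⋃_j B_j |. -/
noncomputable section

open MeasureTheory Set
open scoped ENNReal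

def axisCube (m : ℕ) (cent : EuclideanSpace ℝ (Fin m)) (r : ℝ) :
    Set (EuclideanSpace ℝ (Fin m)) :=
  {x | ∀ i, |x i - cent i| ≤ r / 2}

lemma axisCube_eq (m : ℕ) (cent : EuclideanSpace ℝ (Fin m)) (r : ℝ) :
    axisCube m cent r =
      (MeasurableEquiv.toLp 2 (Fin m → ℝ)).symm ⁻¹'
        (Set.univ.pi fun i => Icc (cent i - r / 2) (cent i + r / 2)) := by
  ext x
  simp only [axisCube, mem_setOf_eq, mem_preimage, mem_pi, mem_univ, forall_true_left,
    mem_Icc, MeasurableEquiv.coe_toLp_symm, MeasurableEquiv.coe_mk]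
  constructor
  · intro h i
    have := h i
    rw [abs_sub_le_iff] at this
    constructor <;> linarith [this.1, this.2]
  · intro h i
    rw [abs_sub_le_iff]
    constructor <;> linarith [(h i).1, (h i).2]

lemma measurableSet_axisCube (m : ℕ) (cent : EuclideanSpace ℝ (Fin m)) (r : ℝ) :
    MeasurableSet (axisCube m cent r) := by
  rw [axisCube_eq]
  exact (MeasurableSet.univ_pi fun i => measurableSet_Icc).preimage
    (MeasurableEquiv.toLp 2 (Fin m → ℝ)).symm.measurable

lemma volume_axisCube (m : ℕ) (cent : EuclideanSpace ℝ (Fin m)) {r : ℝ} (hr : 0 ≤ r) :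
    volume (axisCube m cent r) = ENNReal.ofReal r ^ m := by
  rw [axisCube_eq,
    (EuclideanSpace.volume_preserving_symm_measurableEquiv_toLp (Fin m)).measure_preimage
      (MeasurableSet.univ_pi fun i => measurableSet_Icc).nullMeasurableSet,
    volume_pi_pi]
  have : ∀ i : Fin m, volume (Icc (cent i - r / 2) (cent i + r / 2)) = ENNReal.ofReal r := by
    intro i
    rw [Real.volume_Icc]
    congr 1
    ring
  simp [this]

lemma axisCube_nonempty (m : ℕ) (cent : EuclideanSpace ℝ (Fin m)) {r : ℝ} (hr : 0 ≤ r) :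
    (axisCube m cent r).Nonempty := by
  refine ⟨cent, fun i => ?_⟩
  simp only [sub_self, abs_zero]
  linarith

lemma axisCube_subset_triple {m : ℕ} {c₁ c₂ : EuclideanSpace ℝ (Fin m)} {r₁ r₂ : ℝ}
    (hr : r₂ ≤ r₁) (h : (axisCube m c₁ r₁ ∩ axisCube m c₂ r₂).Nonempty) :
    axisCube m c₂ r₂ ⊆ axisCube m c₁ (3 * r₁) := by
  obtain ⟨x, hx1, hx2⟩ := h
  intro y hy i
  have h1 := hx1 i
  have h2 := hx2 i
  have h3 := hy i
  have t1 : |y i - c₁ i| ≤ |y i - c₂ i| + |c₂ i - x i| + |x i - c₁ i| := by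
    calc |y i - c₁ i| ≤ |y i - c₂ i| + |c₂ i - c₁ i| := abs_sub_le _ _ _
    _ ≤ |y i - c₂ i| + (|c₂ i - x i| + |x i - c₁ i|) := by
        gcongr; exact abs_sub_le _ _ _
    _ = _ := by ring
  have h2' : |c₂ i - x i| ≤ r₂ / 2 := by rwa [abs_sub_comm]
  linarith

lemma axisCube_shrink_subset {m : ℕ} {cent : EuclideanSpace ℝ (Fin m)} {c r : ℝ}
    (hc : c ≤ 1) (hc0 : 0 ≤ c) (hr : 0 ≤ r) :
    axisCube m cent (c * r) ⊆ axisCube m cent r := by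
  intro x hx i
  have := hx i
  nlinarith [this]

lemma vitali_select (m n : ℕ) (cent : Fin n → EuclideanSpace ℝ (Fin m)) (ρ : Fin n → ℝ)
    (hρ : ∀ j, 0 < ρ j) (T : Finset (Fin n)) :
    ∃ S ⊆ T,
      ((S : Set (Fin n)).PairwiseDisjoint fun j => axisCube m (cent j) (ρ j)) ∧
      ∀ j ∈ T, ∃ k ∈ S, axisCube m (cent j) (ρ j) ⊆ axisCube m (cent k) (3 * ρ k) := by
  classical
  induction T using Finset.strongInduction with
  | _ T ih =>
    rcases T.eq_empty_or_nonempty with rfl | hT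
    · exact ⟨∅, Finset.Subset.refl _, by simp, by simp⟩
    obtain ⟨k₀, hk₀T, hk₀max⟩ := T.exists_max_image ρ hT
    set T' := T.filter (fun j => Disjoint (axisCube m (cent j) (ρ j))
      (axisCube m (cent k₀) (ρ k₀))) with hT'
    have hk₀notT' : k₀ ∉ T' := by
      simp only [hT', Finset.mem_filter, not_and]
      intro _
      intro h
      exact (axisCube_nonempty m (cent k₀) (hρ k₀).le).ne_empty (disjoint_self.mp h)
    have hssub : T' ⊂ T :=
      ⟨T.filter_subset _, fun h => hk₀notT' (h hk₀T)⟩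
    obtain ⟨S', hS'sub, hS'dis, hS'cov⟩ := ih T' hssub
    refine ⟨insert k₀ S', ?_, ?_, ?_⟩
    · intro x hx
      rcases Finset.mem_insert.mp hx with rfl | hx
      · exact hk₀T
      · exact (T.filter_subset _) (hS'sub hx)
    · rw [Finset.coe_insert]
      refine hS'dis.insert fun j hj hne => ?_
      have hjT' : j ∈ T' := hS'sub hj
      have := (Finset.mem_filter.mp hjT').2
      exact this.symm
    · intro j hjT
      by_cases hdis : Disjoint (axisCube m (cent j) (ρ j)) (axisCube m (cent k₀) (ρ k₀))
      · have hjT' : j ∈ T' := Finset.mem_filter.mpr ⟨hjT, hdis⟩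
        obtain ⟨k, hkS', hksub⟩ := hS'cov j hjT'
        exact ⟨k, Finset.mem_insert_of_mem hkS', hksub⟩
      · refine ⟨k₀, Finset.mem_insert_self _ _, ?_⟩
        apply axisCube_subset_triple (hk₀max j hjT)
        rw [Set.not_disjoint_iff_nonempty_inter] at hdis
        rwa [Set.inter_comm]

/-- Lower bound for scaled unions of cubes: if each cube `B_j ⊆ ℝ^{d-1}` is shrunk about
its center by a factor `0 < c < 1`, then `|⋃ B_j*| ≥ c^{d-1} 3^{1-d} |⋃ B_j|`. -/
theorem scaled_union_lower_bound (d : ℕ) (hd : 2 ≤ d) (n : ℕ) (c : ℝ)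
    (hc0 : 0 < c) (hc1 : c < 1)
    (cent : Fin n → EuclideanSpace ℝ (Fin (d - 1))) (ρ : Fin n → ℝ)
    (hρ : ∀ j, 0 < ρ j) :
    ENNReal.ofReal (c ^ (d - 1) * (3 : ℝ) ^ ((1 : ℝ) - (d : ℝ))) *
        volume (⋃ j, axisCube (d - 1) (cent j) (ρ j))
      ≤ volume (⋃ j, axisCube (d - 1) (cent j) (c * ρ j)) := by
  classical
  obtain ⟨S, -, hSdis, hScov⟩ := vitali_select (d - 1) n cent ρ hρ Finset.univ
  set Spl : ℝ≥0∞ := ∑ k ∈ S, ENNReal.ofReal (ρ k) ^ (d - 1) with hSpl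
  have key1 : volume (⋃ j, axisCube (d - 1) (cent j) (ρ j)) ≤
      ENNReal.ofReal 3 ^ (d - 1) * Spl := by
    have hsub : (⋃ j, axisCube (d - 1) (cent j) (ρ j)) ⊆
        ⋃ k ∈ S, axisCube (d - 1) (cent k) (3 * ρ k) := by
      refine Set.iUnion_subset fun j => ?_
      obtain ⟨k, hkS, hksub⟩ := hScov j (Finset.mem_univ j)
      exact hksub.trans (Set.subset_biUnion_of_mem
        (u := fun k => axisCube (d - 1) (cent k) (3 * ρ k)) hkS)
    calc volume (⋃ j, axisCube (d - 1) (cent j) (ρ j))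
        ≤ volume (⋃ k ∈ S, axisCube (d - 1) (cent k) (3 * ρ k)) := measure_mono hsub
      _ ≤ ∑ k ∈ S, volume (axisCube (d - 1) (cent k) (3 * ρ k)) :=
          measure_biUnion_finset_le _ _
      _ = ∑ k ∈ S, ENNReal.ofReal 3 ^ (d - 1) * ENNReal.ofReal (ρ k) ^ (d - 1) := by
          refine Finset.sum_congr rfl fun k _ => ?_
          rw [volume_axisCube _ _ (by have := hρ k; positivity),
            ENNReal.ofReal_mul (by norm_num), mul_pow]
      _ = ENNReal.ofReal 3 ^ (d - 1) * Spl := by rw [hSpl, Finset.mul_sum]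
  have key2 : ENNReal.ofReal c ^ (d - 1) * Spl ≤
      volume (⋃ j, axisCube (d - 1) (cent j) (c * ρ j)) := by
    have hdis' : (S : Set (Fin n)).PairwiseDisjoint
        fun j => axisCube (d - 1) (cent j) (c * ρ j) := by
      intro j hj k hk hjk
      exact (hSdis hj hk hjk).mono
        (axisCube_shrink_subset hc1.le hc0.le (hρ j).le)
        (axisCube_shrink_subset hc1.le hc0.le (hρ k).le)
    calc ENNReal.ofReal c ^ (d - 1) * Spl
        = ∑ k ∈ S, volume (axisCube (d - 1) (cent k) (c * ρ k)) := by
          rw [hSpl, Finset.mul_sum]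
          refine Finset.sum_congr rfl fun k _ => ?_
          rw [volume_axisCube _ _ (by have := hρ k; positivity),
            ENNReal.ofReal_mul hc0.le, mul_pow]
      _ = volume (⋃ k ∈ S, axisCube (d - 1) (cent k) (c * ρ k)) :=
          (measure_biUnion_finset hdis' fun k _ => measurableSet_axisCube _ _ _).symm
      _ ≤ volume (⋃ j, axisCube (d - 1) (cent j) (c * ρ j)) :=
          measure_mono (Set.iUnion₂_subset fun k _ =>
            Set.subset_iUnion (fun j => axisCube (d - 1) (cent j) (c * ρ j)) k)
  have hcast : (((d - 1 : ℕ)) : ℝ) = (d : ℝ) - 1 := by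
    rw [Nat.cast_sub (by omega)]; simp
  have hconst : ENNReal.ofReal (c ^ (d - 1) * (3 : ℝ) ^ ((1 : ℝ) - (d : ℝ)))
      = ENNReal.ofReal c ^ (d - 1) * (ENNReal.ofReal 3 ^ (d - 1))⁻¹ := by
    have h3 : (3 : ℝ) ^ ((1 : ℝ) - (d : ℝ)) = ((3 : ℝ) ^ (d - 1 : ℕ))⁻¹ := by
      rw [show (1 : ℝ) - (d : ℝ) = -((d - 1 : ℕ) : ℝ) by rw [hcast]; ring,
        Real.rpow_neg (by norm_num), Real.rpow_natCast]
    rw [h3, ENNReal.ofReal_mul (by positivity), ENNReal.ofReal_pow hc0.le,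
      ENNReal.ofReal_inv_of_pos (by positivity), ENNReal.ofReal_pow (by norm_num)]
  have h3ne0 : ENNReal.ofReal 3 ^ (d - 1) ≠ 0 := by
    apply pow_ne_zero; simp [ENNReal.ofReal_eq_zero]
  have h3netop : ENNReal.ofReal 3 ^ (d - 1) ≠ ⊤ :=
    ENNReal.pow_ne_top ENNReal.ofReal_ne_top
  calc ENNReal.ofReal (c ^ (d - 1) * (3 : ℝ) ^ ((1 : ℝ) - (d : ℝ))) *
        volume (⋃ j, axisCube (d - 1) (cent j) (ρ j))
      = ENNReal.ofReal c ^ (d - 1) * ((ENNReal.ofReal 3 ^ (d - 1))⁻¹ *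
          volume (⋃ j, axisCube (d - 1) (cent j) (ρ j))) := by rw [hconst, mul_assoc]
    _ ≤ ENNReal.ofReal c ^ (d - 1) * ((ENNReal.ofReal 3 ^ (d - 1))⁻¹ *
          (ENNReal.ofReal 3 ^ (d - 1) * Spl)) := by gcongr
    _ = ENNReal.ofReal c ^ (d - 1) * Spl := by
        congr 1
        rw [← mul_assoc, ENNReal.inv_mul_cancel h3ne0 h3netop, one_mul]
    _ ≤ volume (⋃ j, axisCube (d - 1) (cent j) (c * ρ j)) := key2
end
end

section
/- (Incomplete Gauss sum approximation.) There exists an absolute constant C > 0 with the following property. Let q ∈ ℕ with q ≡ 0 (mod 4), let a₁ ∈ ℤ with gcd(a₁,q) = 1, and let a_j ∈ ℤ be even. Then for all real numbers u₀ ≤ u, the incomplete quadratic exponential sum S̃(u) = Σ_{u₀ ≤ ℓ < u, ℓ ∈ ℤ} e^{i( ℓ · 2πa_j/q + ℓ² · 2πa₁/q )} satisfies | |S̃(u)| − √2 (u − u₀)/q^{1/2} | ≤ C q^{1/2} (log q)^{1/2}. -/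
noncomputable section

open scoped BigOperators

namespace IGS
open Complex Finset

def ψ (q : ℕ) (n : ℤ) : ℂ := Complex.exp (2 * Real.pi * Complex.I * n / q)

variable (q : ℕ)

lemma psi_add (n m : ℤ) : ψ q (n + m) = ψ q n * ψ q m := by
  rw [ψ, ψ, ψ, ← Complex.exp_add]; congr 1; push_cast; ring

lemma psi_zero : ψ q 0 = 1 := by simp [ψ]

lemma psi_mul_self (k : ℤ) : ψ q (q * k) = 1 := by
  rcases Nat.eq_zero_or_pos q with h | h
  · simp [ψ, h]
  · rw [ψ]
    have hq : (q : ℂ) ≠ 0 := Nat.cast_ne_zero.2 h.ne'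
    have : 2 * (Real.pi:ℂ) * Complex.I * ((q:ℤ) * k : ℤ) / q = k * (2 * Real.pi * Complex.I) := by
      push_cast; field_simp
    rw [this, Complex.exp_int_mul_two_pi_mul_I]

lemma psi_norm (n : ℤ) : ‖ψ q n‖ = 1 := by
  rw [ψ]
  have : 2 * (Real.pi:ℂ) * Complex.I * n / q = ((2 * Real.pi * n / q : ℝ)) * Complex.I := by
    push_cast; ring
  rw [this, Complex.norm_exp_ofReal_mul_I]

lemma psi_conj (n : ℤ) : (starRingEnd ℂ) (ψ q n) = ψ q (-n) := by
  rw [ψ, ψ, ← Complex.exp_conj]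
  congr 1
  simp only [map_div₀, map_mul, Complex.conj_I, map_ofNat, Complex.conj_ofReal,
    map_intCast, map_natCast]
  push_cast; ring

lemma psi_pow (n : ℤ) (k : ℕ) : ψ q n ^ k = ψ q (n * k) := by
  induction k with
  | zero => simp [psi_zero]
  | succ k ih => rw [pow_succ, ih, ← psi_add]; congr 1; push_cast; ring

lemma psi_eq_one_iff (hq : 0 < q) (n : ℤ) : ψ q n = 1 ↔ (q:ℤ) ∣ n := by
  rw [ψ, Complex.exp_eq_one_iff]
  have hq' : (q : ℂ) ≠ 0 := Nat.cast_ne_zero.2 hq.ne'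
  have hpi : (2 * (Real.pi:ℂ) * Complex.I) ≠ 0 := by
    simp [Real.pi_ne_zero, Complex.I_ne_zero, Complex.ofReal_ne_zero]
  constructor
  · rintro ⟨k, hk⟩
    refine ⟨k, ?_⟩
    have h2 : (n : ℂ) = q * k := by
      have h3 : (n : ℂ) * (2 * Real.pi * Complex.I) = (q * k) * (2 * Real.pi * Complex.I) := by
        field_simp at hk
        linear_combination (2 * (Real.pi:ℂ) * Complex.I) * hk
      exact mul_right_cancel₀ hpi h3
    exact_mod_cast h2
  · rintro ⟨k, hk⟩
    exact ⟨k, by rw [hk]; push_cast; field_simp⟩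


lemma norm_one_sub_exp (θ : ℝ) :
    ‖1 - Complex.exp (θ * Complex.I)‖ = 2 * |Real.sin (θ / 2)| := by
  have hre : (1 - Complex.exp (θ * Complex.I)).re = 1 - Real.cos θ := by
    simp [Complex.exp_ofReal_mul_I_re]
  have him : (1 - Complex.exp (θ * Complex.I)).im = -Real.sin θ := by
    simp [Complex.exp_ofReal_mul_I_im]
  rw [Complex.norm_def, Complex.normSq_apply, hre, him]
  have h1 : (1 - Real.cos θ) ^ 2 + (Real.sin θ) ^ 2 = 2 - 2 * Real.cos θ := by
    have := Real.sin_sq_add_cos_sq θ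
    ring_nf
    nlinarith [this]
  have h2 : 2 - 2 * Real.cos θ = 4 * Real.sin (θ / 2) ^ 2 := by
    have hc := Real.cos_sq (θ / 2)
    have hs := Real.sin_sq_add_cos_sq (θ / 2)
    have : 2 * (θ / 2) = θ := by ring
    rw [this] at hc
    nlinarith [hc, hs]
  rw [show (1 - Real.cos θ) * (1 - Real.cos θ) + -Real.sin θ * -Real.sin θ
      = (1 - Real.cos θ) ^ 2 + (Real.sin θ) ^ 2 by ring, h1, h2,
    show (4 : ℝ) * Real.sin (θ / 2) ^ 2 = (2 * |Real.sin (θ / 2)|) ^ 2 by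
      rw [mul_pow, _root_.sq_abs]; ring]
  exact Real.sqrt_sq (by positivity)


variable (q : ℕ) (a b : ℤ)

/-- The phase polynomial. -/
def P (a b ℓ : ℤ) : ℤ := a * ℓ ^ 2 + b * ℓ

def f (q : ℕ) (a b ℓ : ℤ) : ℂ := ψ q (P a b ℓ)

lemma f_periodic (ℓ : ℤ) : f q a b (ℓ + q) = f q a b ℓ := by
  have : P a b (ℓ + q) = P a b ℓ + q * (2 * a * ℓ + a * q + b) := by rw [P, P]; ring
  rw [f, f, this, psi_add, psi_mul_self, mul_one]

lemma Ico_int_singleton (x : ℤ) : Finset.Ico x (x + 1) = {x} := by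
  ext y; simp [Finset.mem_Ico]; omega

/-- Splitting an integer-interval sum. -/
lemma sum_Ico_split {M : Type*} [AddCommMonoid M] (g : ℤ → M) {a b c : ℤ} (h1 : a ≤ b) (h2 : b ≤ c) :
    ∑ m ∈ Finset.Ico a c, g m = (∑ m ∈ Finset.Ico a b, g m) + ∑ m ∈ Finset.Ico b c, g m := by
  rw [← Finset.Ico_union_Ico_eq_Ico h1 h2,
    Finset.sum_union (Finset.Ico_disjoint_Ico_consecutive a b c)]

/-- Sum over an integer interval as sum over a range. -/
lemma sum_Ico_int {M : Type*} [AddCommMonoid M] (g : ℤ → M) (A : ℤ) (n : ℕ) :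
    ∑ m ∈ Finset.Ico A (A + (n:ℤ)), g m = ∑ j ∈ Finset.range n, g (A + j) := by
  induction n with
  | zero => simp
  | succ n ih =>
    have h1 : A + ((n:ℕ):ℤ) + 1 = (A + n) + 1 := by push_cast; ring
    have h2 : A ≤ A + (n:ℤ) := by omega
    push_cast
    rw [← add_assoc]
    rw [sum_Ico_split g h2 (by omega : A + (n:ℤ) ≤ A + n + 1), Ico_int_singleton,
      Finset.sum_singleton, Finset.sum_range_succ, ih]

/-- Linear sum over an interval as a geometric series. -/
lemma linear_sum (c A : ℤ) (n : ℕ) :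
    ∑ m ∈ Finset.Ico A (A + n), ψ q (c * m) = ψ q (c * A) * ∑ j ∈ Finset.range n, ψ q c ^ j := by
  rw [sum_Ico_int, Finset.mul_sum]
  refine Finset.sum_congr rfl fun j hj => ?_
  rw [psi_pow, ← psi_add]
  congr 1; push_cast; ring

lemma full_period_sum (hq : 0 < q) (c A : ℤ) :
    ∑ m ∈ Finset.Ico A (A + q), ψ q (c * m) = if (q:ℤ) ∣ c then (q:ℂ) else 0 := by
  rw [linear_sum]
  by_cases h : (q:ℤ) ∣ c
  · rw [if_pos h]
    obtain ⟨k, hk⟩ := h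
    have h1 : ψ q c = 1 := by rw [hk, psi_mul_self]
    have h2 : ψ q (c * A) = 1 := by rw [hk, mul_assoc, psi_mul_self]
    simp [h1, h2]
  · rw [if_neg h]
    have h1 : ψ q c ≠ 1 := fun hc => h ((psi_eq_one_iff q hq c).1 hc)
    rw [geom_sum_eq h1]
    have : ψ q c ^ q = 1 := by rw [psi_pow, mul_comm, psi_mul_self]
    rw [this]; simp

/-- Norm bound for an incomplete linear sum. -/
lemma linear_sum_bound (c A : ℤ) (n : ℕ) (h1 : ψ q c ≠ 1) :
    ‖∑ m ∈ Finset.Ico A (A + n), ψ q (c * m)‖ ≤ 2 / ‖1 - ψ q c‖ := by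
  rw [linear_sum, norm_mul, psi_norm, one_mul, geom_sum_eq h1]
  rw [norm_div]
  have hz : ‖ψ q c ^ n - 1‖ ≤ 2 := by
    calc ‖ψ q c ^ n - 1‖ ≤ ‖ψ q c ^ n‖ + ‖(1:ℂ)‖ := norm_sub_le _ _
    _ ≤ 2 := by rw [norm_pow, psi_norm]; norm_num
  have : ‖ψ q c - 1‖ = ‖1 - ψ q c‖ := by rw [← norm_neg]; ring_nf
  rw [this]
  have hpos : 0 < ‖1 - ψ q c‖ := by
    rw [norm_pos_iff, sub_ne_zero]; exact fun hh => h1 hh.symm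
  exact div_le_div_of_nonneg_right hz hpos.le |>.trans_eq rfl

lemma psi_as_exp (n : ℤ) : ψ q n = Complex.exp (((2 * Real.pi * n / q : ℝ) : ℂ) * Complex.I) := by
  rw [ψ]; congr 1; push_cast; ring

lemma psi_emod (c : ℤ) : ψ q (c % q) = ψ q c := by
  conv_rhs => rw [show c = (q:ℤ) * (c / q) + c % q from (Int.mul_ediv_add_emod c q).symm]
  rw [psi_add, psi_mul_self, one_mul]

/-- Lower bound on `‖1 - ψ q c‖` in terms of the distance of `c mod q` to `0`. -/
lemma one_sub_psi_lower (hq : 0 < q) (c : ℤ) (hc0 : 0 < c % q) :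
    (4 : ℝ) * (min (c % q) (q - c % q) : ℤ) / q ≤ ‖1 - ψ q c‖ := by
  set r : ℤ := c % q with hr
  have hrq : r < q := Int.emod_lt_of_pos c (by exact_mod_cast hq)
  have hq' : (0:ℝ) < q := by exact_mod_cast hq
  have hr0' : (0:ℝ) < (r:ℝ) := by exact_mod_cast hc0
  have hrq' : (r:ℝ) < q := by exact_mod_cast hrq
  rw [← psi_emod, ← hr, psi_as_exp, norm_one_sub_exp]
  have habs : |Real.sin (2 * Real.pi * r / q / 2)| = Real.sin (Real.pi * r / q) := by
    rw [show 2 * Real.pi * (r:ℝ) / q / 2 = Real.pi * r / q by ring]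
    refine abs_of_nonneg (Real.sin_nonneg_of_nonneg_of_le_pi (by positivity) ?_)
    rw [div_le_iff₀ hq']
    have : (r:ℝ) ≤ q := hrq'.le
    nlinarith [Real.pi_pos]
  rw [habs]
  have key : 2 * ((min r (q - r) : ℤ) : ℝ) / q ≤ Real.sin (Real.pi * r / q) := by
    rcases le_or_gt (2 * r) (q:ℤ) with h | h
    · have hmin : min r ((q:ℤ) - r) = r := min_eq_left (by omega)
      rw [hmin]
      have hx2 : Real.pi * r / q ≤ Real.pi / 2 := by
        rw [div_le_div_iff₀ hq' two_pos]
        have : (2:ℝ) * r ≤ q := by exact_mod_cast h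
        nlinarith [Real.pi_pos]
      have := Real.mul_le_sin (x := Real.pi * r / q) (by positivity) hx2
      calc 2 * ((r:ℤ):ℝ) / q = 2 / Real.pi * (Real.pi * r / q) := by
            field_simp
          _ ≤ Real.sin (Real.pi * r / q) := this
    · have hmin : min r ((q:ℤ) - r) = (q:ℤ) - r := min_eq_right (by omega)
      rw [hmin]
      have hsin : Real.sin (Real.pi * r / q) = Real.sin (Real.pi * ((q:ℝ) - r) / q) := by
        rw [show Real.pi * ((q:ℝ) - r) / q = Real.pi - Real.pi * r / q by field_simp,
          Real.sin_pi_sub]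
      rw [hsin]
      have hx2 : Real.pi * ((q:ℝ) - r) / q ≤ Real.pi / 2 := by
        rw [div_le_div_iff₀ hq' two_pos]
        have : (q:ℝ) ≤ 2 * r := by exact_mod_cast h.le
        nlinarith [Real.pi_pos]
      have hqr0 : (0:ℝ) ≤ (q:ℝ) - r := by linarith
      have := Real.mul_le_sin (x := Real.pi * ((q:ℝ) - r) / q)
        (by positivity) hx2
      calc 2 * (((q:ℤ) - r : ℤ):ℝ) / q = 2 / Real.pi * (Real.pi * ((q:ℝ) - r) / q) := by
            push_cast; field_simp
          _ ≤ Real.sin (Real.pi * ((q:ℝ) - r) / q) := this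
  calc (4:ℝ) * ((min r ((q:ℤ) - r) : ℤ):ℝ) / q = 2 * (2 * ((min r ((q:ℤ) - r):ℤ):ℝ) / q) := by ring
    _ ≤ 2 * Real.sin (Real.pi * r / q) := by linarith [key]



/-- One-step window shift for a `q`-periodic function. -/
lemma window_succ {M : Type*} [AddCommGroup M] (g : ℤ → M) (hg : ∀ ℓ, g (ℓ + q) = g ℓ) (s : ℤ) :
    ∑ m ∈ Finset.Ico (s + 1) (s + 1 + q), g m = ∑ m ∈ Finset.Ico s (s + q), g m := by
  have e1 := sum_Ico_split (a := s) (b := s+1) (c := s + q + 1) g (by omega) (by omega)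
  have e2 := sum_Ico_split (a := s) (b := s+q) (c := s + q + 1) g (by omega) (by omega)
  rw [Ico_int_singleton, Finset.sum_singleton] at e1
  rw [Ico_int_singleton, Finset.sum_singleton, hg s] at e2
  rw [show s + 1 + (q:ℤ) = s + q + 1 from by ring]
  have h3 := e1.symm.trans e2
  rw [add_comm (g s)] at h3
  exact add_right_cancel h3

/-- Sum of a `q`-periodic function over any window of length `q` is window-independent. -/
lemma periodic_window_sum {M : Type*} [AddCommGroup M] (g : ℤ → M) (hg : ∀ ℓ, g (ℓ + q) = g ℓ) (s : ℤ) :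
    ∑ m ∈ Finset.Ico s (s + q), g m = ∑ m ∈ Finset.Ico 0 (q:ℤ), g m := by
  induction s using Int.induction_on with
  | zero => simp
  | succ s ih => rw [window_succ q g hg (s:ℤ)]; exact ih
  | pred s ih =>
    have h := window_succ q g hg (-(s:ℤ)-1)
    rw [show (-(s:ℤ)-1) + 1 + (q:ℤ) = -(s:ℤ) + q from by ring,
      show (-(s:ℤ)-1) + 1 = -(s:ℤ) from by ring] at h
    rw [← h]
    exact ih

/-- Shifting the index in an interval sum. -/
lemma sum_Ico_shift {M : Type*} [AddCommMonoid M] (g : ℤ → M) (m A B : ℤ) :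
    ∑ ℓ ∈ Finset.Ico (m + A) (m + B), g ℓ = ∑ h ∈ Finset.Ico A B, g (m + h) := by
  rw [← Finset.map_add_left_Ico, Finset.sum_map]
  rfl

variable {a b : ℤ}

/-- The complete Gauss sum has squared modulus `2q`. -/
lemma gauss_conj_mul (hq : 0 < q) (hq4 : q % 4 = 0) (ha : Int.gcd a q = 1) (hb : b % 2 = 0) :
    (starRingEnd ℂ) (∑ ℓ ∈ Finset.Ico 0 (q:ℤ), f q a b ℓ) * (∑ ℓ ∈ Finset.Ico 0 (q:ℤ), f q a b ℓ)
      = 2 * q := by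
  rw [map_sum, Finset.sum_mul_sum]
  have step1 : ∀ m ∈ Finset.Ico 0 (q:ℤ),
      ∑ ℓ ∈ Finset.Ico 0 (q:ℤ), (starRingEnd ℂ) (f q a b m) * f q a b ℓ
      = ∑ h ∈ Finset.Ico 0 (q:ℤ), ψ q (a * h^2 + b * h) * ψ q ((2 * a * h) * m) := by
    intro m _
    have hper : ∀ ℓ, (starRingEnd ℂ) (f q a b m) * f q a b (ℓ + q)
        = (starRingEnd ℂ) (f q a b m) * f q a b ℓ := fun ℓ => by rw [f_periodic]
    calc ∑ ℓ ∈ Finset.Ico 0 (q:ℤ), (starRingEnd ℂ) (f q a b m) * f q a b ℓ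
        = ∑ ℓ ∈ Finset.Ico m (m + q), (starRingEnd ℂ) (f q a b m) * f q a b ℓ :=
          (periodic_window_sum q _ hper m).symm
      _ = ∑ h ∈ Finset.Ico 0 (q:ℤ), (starRingEnd ℂ) (f q a b m) * f q a b (m + h) := by
          have := sum_Ico_shift (fun ℓ => (starRingEnd ℂ) (f q a b m) * f q a b ℓ) m 0 q
          simpa using this
      _ = ∑ h ∈ Finset.Ico 0 (q:ℤ), ψ q (a * h^2 + b * h) * ψ q ((2 * a * h) * m) := by
          refine Finset.sum_congr rfl fun h _ => ?_
          rw [f, f, psi_conj, ← psi_add, ← psi_add]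
          congr 1
          rw [P, P]; ring
  rw [Finset.sum_congr rfl step1, Finset.sum_comm]
  have step2 : ∀ h ∈ Finset.Ico 0 (q:ℤ),
      ∑ m ∈ Finset.Ico 0 (q:ℤ), ψ q (a * h^2 + b * h) * ψ q ((2 * a * h) * m)
      = ψ q (a * h^2 + b * h) * (if (q:ℤ) ∣ 2 * a * h then (q:ℂ) else 0) := by
    intro h _
    rw [← Finset.mul_sum]
    congr 1
    have := full_period_sum q hq (2 * a * h) 0
    rwa [zero_add] at this
  rw [Finset.sum_congr rfl step2]
  -- only h = 0 and h = q/2 contribute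
  obtain ⟨t, ht⟩ : ∃ t : ℕ, q = 4 * t := ⟨q / 4, by omega⟩
  have ht0 : 0 < t := by omega
  have hsub : ({0, 2 * (t:ℤ)} : Finset ℤ) ⊆ Finset.Ico 0 (q:ℤ) := by
    intro x hx
    simp only [Finset.mem_insert, Finset.mem_singleton] at hx
    rw [Finset.mem_Ico]
    rcases hx with rfl | rfl <;> omega
  have hvanish : ∀ x ∈ Finset.Ico 0 (q:ℤ), x ∉ ({0, 2 * (t:ℤ)} : Finset ℤ) →
      ψ q (a * x^2 + b * x) * (if (q:ℤ) ∣ 2 * a * x then (q:ℂ) else 0) = 0 := by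
    intro x hx hnx
    simp only [Finset.mem_insert, Finset.mem_singleton, not_or] at hnx
    rw [if_neg, mul_zero]
    intro hdvd
    have hcop : IsCoprime (a : ℤ) (q : ℤ) := Int.isCoprime_iff_gcd_eq_one.2 ha
    have h2x : (q:ℤ) ∣ 2 * x := by
      have : (q:ℤ) ∣ a * (2 * x) := by rwa [show a * (2*x) = 2*a*x by ring]
      exact (IsCoprime.dvd_of_dvd_mul_left (by exact hcop.symm) this)
    rw [Finset.mem_Ico] at hx
    obtain ⟨k, hk⟩ := h2x
    have hqpos : (0:ℤ) < q := by exact_mod_cast hq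
    have hk2 : k < 2 := by nlinarith [hx.1, hx.2, hqpos, hk]
    have hk0 : 0 ≤ k := by nlinarith [hx.1, hx.2, hqpos, hk]
    interval_cases k <;> omega
  rw [← Finset.sum_subset hsub hvanish]
  have hne : (0:ℤ) ≠ 2 * (t:ℤ) := by omega
  rw [Finset.sum_pair hne]
  have hv0 : ψ q (a * 0^2 + b * 0) * (if (q:ℤ) ∣ 2 * a * 0 then (q:ℂ) else 0) = q := by
    simp [psi_zero]
  have hdvd2 : (q:ℤ) ∣ 2 * a * (2 * t) := ⟨a, by push_cast [ht]; ring⟩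
  obtain ⟨b', hb'⟩ : ∃ b', b = 2 * b' := ⟨b / 2, by omega⟩
  have hdvd3 : ψ q (a * (2*(t:ℤ))^2 + b * (2*t)) = 1 := by
    have : a * (2*(t:ℤ))^2 + b * (2*t) = (q:ℤ) * (a * t + b') := by
      rw [hb']; push_cast [ht]; ring
    rw [this, psi_mul_self]
  rw [hv0, if_pos hdvd2, hdvd3, one_mul]
  ring


/-- Extended geometric bound for arbitrary endpoints. -/
lemma linear_sum_bound' (c A B : ℤ) (h1 : ψ q c ≠ 1) :
    ‖∑ m ∈ Finset.Ico A B, ψ q (c * m)‖ ≤ 2 / ‖1 - ψ q c‖ := by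
  rcases le_or_gt B A with h | h
  · rw [Finset.Ico_eq_empty (by omega), Finset.sum_empty, norm_zero]
    positivity
  · have hB : B = A + ((B - A).toNat : ℤ) := by omega
    rw [hB]
    exact linear_sum_bound q c A (B - A).toNat h1

lemma harmonic_sum_bound (hq : 1 ≤ q) :
    ∑ v ∈ Finset.Ico (1:ℤ) (q:ℤ), (1 / (v:ℝ)) ≤ 1 + Real.log q := by
  have hq' : (q:ℤ) = 1 + ((q - 1 : ℕ) : ℤ) := by omega
  rw [hq', sum_Ico_int (fun v => 1 / (v:ℝ)) 1 (q-1)]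
  have : ∑ j ∈ Finset.range (q-1), (1 / ((1 + (j:ℤ) : ℤ) : ℝ)) = (harmonic (q-1) : ℝ) := by
    rw [harmonic, Rat.cast_sum]
    refine Finset.sum_congr rfl fun j _ => ?_
    push_cast
    rw [one_div, add_comm]
  rw [this]
  refine (harmonic_le_one_add_log (q-1)).trans ?_
  have h1 : (1:ℝ) ≤ ((q-1:ℕ):ℝ) ∨ (q-1) = 0 := by
    rcases Nat.lt_or_ge q 2 with h | h
    · right; omega
    · left; exact_mod_cast Nat.le_sub_one_of_lt (by omega)
  rcases h1 with h1 | h1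
  · have := Real.log_le_log (by linarith) (show ((q-1:ℕ):ℝ) ≤ (q:ℕ) from Nat.cast_le.2 (Nat.sub_le q 1))
    linarith
  · rw [h1]
    simp only [Nat.cast_zero, Real.log_zero]
    have : (1:ℝ) ≤ q := by exact_mod_cast hq
    have := Real.log_nonneg this
    linarith

lemma g_sum_bound (hq : 1 ≤ q) :
    ∑ v ∈ Finset.Ico (1:ℤ) (q:ℤ), (q:ℝ) / (2 * ((min v ((q:ℤ) - v) : ℤ) : ℝ))
      ≤ (q:ℝ) * (1 + Real.log q) := by
  have hq' : (0:ℝ) < q := by exact_mod_cast hq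
  have step1 : ∀ v ∈ Finset.Ico (1:ℤ) (q:ℤ),
      (q:ℝ) / (2 * ((min v ((q:ℤ) - v) : ℤ) : ℝ))
        ≤ (q:ℝ)/2 * (1 / (v:ℝ)) + (q:ℝ)/2 * (1 / (((q:ℤ) - v : ℤ) : ℝ)) := by
    intro v hv
    rw [Finset.mem_Ico] at hv
    have hv1 : (1:ℝ) ≤ (v:ℝ) := by exact_mod_cast hv.1
    have hv2 : (1:ℝ) ≤ (((q:ℤ) - v : ℤ):ℝ) := by
      have : (1:ℤ) ≤ (q:ℤ) - v := by omega
      exact_mod_cast this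
    rcases min_cases v ((q:ℤ) - v) with ⟨hmin, _⟩ | ⟨hmin, _⟩ <;> rw [hmin]
    · have : (q:ℝ) / (2 * (v:ℝ)) = (q:ℝ)/2 * (1/(v:ℝ)) := by ring
      rw [this]
      have hpos : 0 < (q:ℝ)/2 * (1 / (((q:ℤ) - v : ℤ):ℝ)) := by positivity
      linarith
    · have : (q:ℝ) / (2 * (((q:ℤ) - v:ℤ):ℝ)) = (q:ℝ)/2 * (1/(((q:ℤ) - v:ℤ):ℝ)) := by ring
      rw [this]
      have hpos : 0 < (q:ℝ)/2 * (1 / ((v:ℤ):ℝ)) := by positivity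
      linarith
  refine (Finset.sum_le_sum step1).trans ?_
  rw [Finset.sum_add_distrib, ← Finset.mul_sum, ← Finset.mul_sum]
  have refl : ∑ v ∈ Finset.Ico (1:ℤ) (q:ℤ), (1 / (((q:ℤ) - v : ℤ) : ℝ))
      = ∑ v ∈ Finset.Ico (1:ℤ) (q:ℤ), (1 / (v:ℝ)) := by
    refine Finset.sum_nbij' (fun v => (q:ℤ) - v) (fun v => (q:ℤ) - v) ?_ ?_ ?_ ?_ ?_
    · intro v hv; simp only [Finset.mem_Ico] at *; omega
    · intro v hv; simp only [Finset.mem_Ico] at *; omega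
    · intro v _; omega
    · intro v _; omega
    · intro v _; simp only []
  rw [refl]
  have := harmonic_sum_bound q hq
  nlinarith [this, Finset.sum_le_sum (fun v (hv : v ∈ Finset.Ico (1:ℤ) (q:ℤ)) => le_refl (1/(v:ℝ)))]


/-- Coprimality cancellation: `q ∣ 2ad` implies `q/2 ∣ d`. -/
lemma half_dvd {q : ℕ} {a : ℤ} (hq : 0 < q) (hq4 : q % 4 = 0) (ha : Int.gcd a (q:ℤ) = 1) {d : ℤ}
    (hd : (q:ℤ) ∣ 2 * a * d) : ((q / 2 : ℕ) : ℤ) ∣ d := by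
  have hcop : IsCoprime (a : ℤ) (q : ℤ) := Int.isCoprime_iff_gcd_eq_one.2 ha
  have h2d : (q:ℤ) ∣ 2 * d := by
    have : (q:ℤ) ∣ a * (2 * d) := by rwa [show a * (2*d) = 2*a*d by ring]
    exact IsCoprime.dvd_of_dvd_mul_left hcop.symm this
  obtain ⟨k, hk⟩ := h2d
  refine ⟨k, ?_⟩
  have hqm : (q:ℤ) = 2 * ((q/2 : ℕ):ℤ) := by
    have : q = 2 * (q / 2) := by omega
    exact_mod_cast this
  have h2 : 2 * d = 2 * (((q/2:ℕ):ℤ) * k) := by rw [hk, hqm]; ring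
  exact mul_left_cancel₀ two_ne_zero h2

/-- Weyl differencing: squared modulus of an incomplete sum of length at most `q`. -/
lemma weyl_bound {q : ℕ} {a b : ℤ} (hq : 0 < q) (hq4 : q % 4 = 0) (ha : Int.gcd a (q:ℤ) = 1)
    (s : ℤ) (n : ℕ) (hn : n ≤ q) :
    ‖∑ ℓ ∈ Finset.Ico s (s + (n:ℤ)), f q a b ℓ‖^2
      ≤ 8*(q:ℝ) + 4*(q:ℝ)*(1 + Real.log q) := by
  set R := ∑ ℓ ∈ Finset.Ico s (s + (n:ℤ)), f q a b ℓ with hR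
  set I : Finset ℤ := Finset.Ico s (s + (n:ℤ)) with hI
  set D : Finset ℤ := Finset.Ico (1 - (n:ℤ)) (n:ℤ) with hD
  set T : ℤ → ℂ := fun h => ψ q (a*h^2 + b*h) *
    ∑ m ∈ Finset.Ico (max s (s - h)) (min (s + (n:ℤ)) (s + (n:ℤ) - h)), ψ q ((2*a*h) * m)
    with hT
  have key : (starRingEnd ℂ) R * R = ∑ h ∈ D, T h := by
    rw [hR, map_sum, Finset.sum_mul_sum, ← Finset.sum_product']
    rw [← Finset.sum_fiberwise_of_maps_to (g := fun p : ℤ × ℤ => p.2 - p.1) (t := D) ?hmaps]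
    case hmaps =>
      intro p hp
      rw [Finset.mem_product, Finset.mem_Ico, Finset.mem_Ico] at hp
      rw [hD, Finset.mem_Ico]
      omega
    refine Finset.sum_congr rfl fun h _ => ?_
    simp only [hT]
    have bij : ∑ p ∈ (I ×ˢ I).filter (fun p : ℤ × ℤ => p.2 - p.1 = h),
        (starRingEnd ℂ) (f q a b p.1) * f q a b p.2
        = ∑ m ∈ Finset.Ico (max s (s - h)) (min (s + (n:ℤ)) (s + (n:ℤ) - h)),
          (starRingEnd ℂ) (f q a b m) * f q a b (m + h) := by
      refine Finset.sum_nbij' (fun p => p.1) (fun m => (m, m + h)) ?_ ?_ ?_ ?_ ?_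
      · intro p hp
        simp only [Finset.mem_filter, Finset.mem_product, hI, Finset.mem_Ico] at hp
        simp only [Finset.mem_Ico]
        omega
      · intro m hm
        simp only [Finset.mem_Ico, max_le_iff, lt_min_iff] at hm
        simp only [Finset.mem_filter, Finset.mem_product, hI, Finset.mem_Ico]
        refine ⟨⟨⟨by omega, by omega⟩, ⟨by omega, by omega⟩⟩, by omega⟩
      · intro p hp
        simp only [Finset.mem_filter] at hp
        ext <;> simp <;> omega
      · intro m _
        simp
      · intro p hp
        simp only [Finset.mem_filter] at hp
        have : p.2 = p.1 + h := by omega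
        rw [this]
    rw [bij, Finset.mul_sum]
    refine Finset.sum_congr rfl fun m _ => ?_
    rw [f, f, psi_conj, ← psi_add, ← psi_add]
    congr 1
    rw [P, P]; ring
  -- pointwise bound
  set gfun : ℤ → ℝ := fun v => (q:ℝ) / (2 * ((min v ((q:ℤ) - v) : ℤ) : ℝ)) with hgfun
  set B : ℤ → ℝ := fun h => if (q:ℤ) ∣ 2*a*h then (q:ℝ) else gfun ((2*a*h) % q) with hB
  have hq' : (0:ℝ) < q := by exact_mod_cast hq
  have hgpos : ∀ v : ℤ, 1 ≤ v → v < q → 0 ≤ gfun v := by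
    intro v h1 h2
    have : (1:ℤ) ≤ min v ((q:ℤ) - v) := by omega
    have : (1:ℝ) ≤ ((min v ((q:ℤ) - v) : ℤ) : ℝ) := by exact_mod_cast this
    simp only [hgfun]
    positivity
  have hmodmem : ∀ h : ℤ, ¬ (q:ℤ) ∣ 2*a*h → (1 ≤ (2*a*h) % q ∧ (2*a*h) % q < q) := by
    intro h hnd
    have h0 : 0 ≤ (2*a*h) % q := Int.emod_nonneg _ (by exact_mod_cast hq.ne')
    have h1 : (2*a*h) % q < q := Int.emod_lt_of_pos _ (by exact_mod_cast hq)
    have h2 : (2*a*h) % q ≠ 0 := fun hc => hnd (Int.dvd_of_emod_eq_zero hc)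
    omega
  have hB0 : ∀ h : ℤ, 0 ≤ B h := by
    intro h
    simp only [hB]
    by_cases hd : (q:ℤ) ∣ 2*a*h
    · rw [if_pos hd]; positivity
    · rw [if_neg hd]
      obtain ⟨h1, h2⟩ := hmodmem h hd
      exact hgpos _ h1 h2
  have hTB : ∀ h : ℤ, ‖T h‖ ≤ B h := by
    intro h
    simp only [hT, hB, norm_mul, psi_norm, one_mul]
    by_cases hd : (q:ℤ) ∣ 2*a*h
    · rw [if_pos hd]
      calc ‖∑ m ∈ Finset.Ico (max s (s - h)) (min (s + (n:ℤ)) (s + (n:ℤ) - h)),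
            ψ q ((2*a*h) * m)‖
          ≤ ∑ m ∈ Finset.Ico (max s (s - h)) (min (s + (n:ℤ)) (s + (n:ℤ) - h)),
            ‖ψ q ((2*a*h) * m)‖ := norm_sum_le _ _
        _ = ((Finset.Ico (max s (s - h)) (min (s + (n:ℤ)) (s + (n:ℤ) - h))).card : ℝ) := by
            rw [Finset.sum_congr rfl (fun m _ => psi_norm q ((2*a*h) * m)), Finset.sum_const,
              nsmul_eq_mul, mul_one]
        _ ≤ (q:ℝ) := by
            have hsub : Finset.Ico (max s (s - h)) (min (s + (n:ℤ)) (s + (n:ℤ) - h))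
                ⊆ Finset.Ico s (s + (q:ℤ)) := by
              apply Finset.Ico_subset_Ico (le_max_left _ _)
              refine (min_le_left _ _).trans ?_
              omega
            have := Finset.card_le_card hsub
            have hcard : (Finset.Ico s (s + (q:ℤ))).card = q := by
              rw [Int.card_Ico]; omega
            have : (Finset.Ico (max s (s - h)) (min (s + (n:ℤ)) (s + (n:ℤ) - h))).card ≤ q := by
              omega
            exact_mod_cast this
    · rw [if_neg hd]
      obtain ⟨hm1, hm2⟩ := hmodmem h hd
      have hne : ψ q (2*a*h) ≠ 1 := fun hc => hd ((psi_eq_one_iff q hq _).1 hc)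
      refine (linear_sum_bound' q _ _ _ hne).trans ?_
      have hlow := one_sub_psi_lower q hq (2*a*h) (by omega)
      set d : ℤ := min ((2*a*h) % q) ((q:ℤ) - (2*a*h) % q) with hd'
      have hd1 : (1:ℤ) ≤ d := by rw [hd']; omega
      have hd1' : (1:ℝ) ≤ (d:ℝ) := by exact_mod_cast hd1
      have hnorm_pos : (0:ℝ) < 4 * (d:ℝ) / q := by positivity
      have : 2 / ‖1 - ψ q (2*a*h)‖ ≤ 2 / (4 * (d:ℝ) / q) := by
        apply div_le_div_of_nonneg_left (by norm_num) hnorm_pos hlow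
      refine this.trans ?_
      simp only [hgfun]
      rw [show (2:ℝ) / (4 * (d:ℝ) / q) = (q:ℝ) / (2 * (d:ℝ)) by field_simp; ring]
  -- main counting estimate
  have hnormsq : ‖R‖^2 ≤ ∑ h ∈ D, ‖T h‖ := by
    have h1 : ‖R‖^2 = ‖(starRingEnd ℂ) R * R‖ := by
      rw [norm_mul, RCLike.norm_conj, sq]
    rw [h1, key]
    exact norm_sum_le _ _
  set m : ℕ := q / 2 with hm
  have hm2 : q = 2 * m := by omega
  have hm4 : (0:ℤ) < m := by
    have : 4 ≤ q := by omega
    omega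
  set L : ℤ := 1 - (n:ℤ) with hL
  have hDsub : D ⊆ Finset.Ico L (L + 4*(m:ℤ)) := by
    rw [hD]
    apply Finset.Ico_subset_Ico le_rfl
    omega
  have step_sum : ∑ h ∈ D, ‖T h‖ ≤ ∑ h ∈ Finset.Ico L (L + 4*(m:ℤ)), B h := by
    calc ∑ h ∈ D, ‖T h‖ ≤ ∑ h ∈ D, B h := Finset.sum_le_sum fun h _ => hTB h
      _ ≤ ∑ h ∈ Finset.Ico L (L + 4*(m:ℤ)), B h :=
          Finset.sum_le_sum_of_subset_of_nonneg hDsub fun h _ _ => hB0 h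
  -- each window of length m contributes at most q + ∑ gfun
  have piece : ∀ X : ℤ, ∑ h ∈ Finset.Ico X (X + (m:ℤ)), B h
      ≤ (q:ℝ) + ∑ v ∈ Finset.Ico (1:ℤ) (q:ℤ), gfun v := by
    intro X
    rw [← Finset.sum_filter_add_sum_filter_not (Finset.Ico X (X + (m:ℤ)))
      (fun h => (q:ℤ) ∣ 2*a*h)]
    have inj_half : ∀ h ∈ Finset.Ico X (X + (m:ℤ)), ∀ h' ∈ Finset.Ico X (X + (m:ℤ)),
        (q:ℤ) ∣ 2*a*(h - h') → h = h' := by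
      intro h hh h' hh'
      intro hdvd
      have := half_dvd hq hq4 ha hdvd
      rw [Finset.mem_Ico] at hh hh'
      have habs : |h - h'| < ((q/2:ℕ):ℤ) := by
        rw [abs_lt]
        constructor <;> omega
      have := Int.eq_zero_of_abs_lt_dvd this habs
      omega
    have part1 : ∑ h ∈ (Finset.Ico X (X + (m:ℤ))).filter (fun h => (q:ℤ) ∣ 2*a*h), B h
        ≤ (q:ℝ) := by
      have hcard : ((Finset.Ico X (X + (m:ℤ))).filter (fun h => (q:ℤ) ∣ 2*a*h)).card ≤ 1 := by
        rw [Finset.card_le_one]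
        intro h hh h' hh'
        rw [Finset.mem_filter] at hh hh'
        refine inj_half h hh.1 h' hh'.1 ?_
        have : (q:ℤ) ∣ 2*a*h - 2*a*h' := dvd_sub hh.2 hh'.2
        rwa [show 2*a*h - 2*a*h' = 2*a*(h-h') by ring] at this
      have hval : ∀ h ∈ (Finset.Ico X (X + (m:ℤ))).filter (fun h => (q:ℤ) ∣ 2*a*h),
          B h = (q:ℝ) := by
        intro h hh
        rw [Finset.mem_filter] at hh
        simp only [hB]; exact if_pos hh.2
      calc ∑ h ∈ (Finset.Ico X (X + (m:ℤ))).filter (fun h => (q:ℤ) ∣ 2*a*h), B h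
          = ∑ h ∈ (Finset.Ico X (X + (m:ℤ))).filter (fun h => (q:ℤ) ∣ 2*a*h), (q:ℝ) :=
            Finset.sum_congr rfl hval
        _ = ((Finset.Ico X (X + (m:ℤ))).filter (fun h => (q:ℤ) ∣ 2*a*h)).card * (q:ℝ) := by
            rw [Finset.sum_const, nsmul_eq_mul]
        _ ≤ 1 * (q:ℝ) := by
            apply mul_le_mul_of_nonneg_right _ hq'.le
            exact_mod_cast hcard
        _ = (q:ℝ) := one_mul _
    have part2 : ∑ h ∈ (Finset.Ico X (X + (m:ℤ))).filter (fun h => ¬ (q:ℤ) ∣ 2*a*h), B h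
        ≤ ∑ v ∈ Finset.Ico (1:ℤ) (q:ℤ), gfun v := by
      set P1 := (Finset.Ico X (X + (m:ℤ))).filter (fun h => ¬ (q:ℤ) ∣ 2*a*h) with hP1
      have hBval : ∀ h ∈ P1, B h = gfun ((2*a*h) % q) := by
        intro h hh
        rw [hP1, Finset.mem_filter] at hh
        simp only [hB]; exact if_neg hh.2
      rw [Finset.sum_congr rfl hBval]
      have hinj : Set.InjOn (fun h => (2*a*h) % q) P1 := by
        intro h hh h' hh' heq
        simp only at heq
        simp only [hP1, Finset.coe_filter, Set.mem_setOf_eq, Finset.mem_Ico] at hh hh'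
        refine inj_half h (Finset.mem_Ico.mpr hh.1) h' (Finset.mem_Ico.mpr hh'.1) ?_
        have hmeq : (2*a*h) ≡ (2*a*h') [ZMOD (q:ℕ)] := heq
        have := Int.ModEq.dvd hmeq
        have : (q:ℤ) ∣ 2*a*h - 2*a*h' := by
          have h2 := dvd_neg.2 this
          rwa [neg_sub] at h2
        rwa [show 2*a*h - 2*a*h' = 2*a*(h-h') by ring] at this
      rw [← Finset.sum_image hinj]
      apply Finset.sum_le_sum_of_subset_of_nonneg
      · intro v hv
        rw [Finset.mem_image] at hv
        obtain ⟨h, hh, rfl⟩ := hv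
        rw [hP1, Finset.mem_filter] at hh
        obtain ⟨h1, h2⟩ := hmodmem h hh.2
        rw [Finset.mem_Ico]
        exact ⟨h1, h2⟩
      · intro v hv _
        rw [Finset.mem_Ico] at hv
        exact hgpos v hv.1 hv.2
    linarith [part1, part2]
  -- assemble four pieces
  have four_pieces : ∑ h ∈ Finset.Ico L (L + 4*(m:ℤ)), B h
      ≤ 4 * ((q:ℝ) + ∑ v ∈ Finset.Ico (1:ℤ) (q:ℤ), gfun v) := by
    have e1 := sum_Ico_split (a := L) (b := L + m) (c := L + 4*(m:ℤ)) B (by omega) (by omega)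
    have e2 := sum_Ico_split (a := L + m) (b := L + 2*m) (c := L + 4*(m:ℤ)) B (by omega) (by omega)
    have e3 := sum_Ico_split (a := L + 2*m) (b := L + 3*m) (c := L + 4*(m:ℤ)) B (by omega) (by omega)
    have p1 := piece L
    have p2 := piece (L + m)
    have p3 := piece (L + 2*m)
    have p4 := piece (L + 3*m)
    rw [show L + (m:ℤ) + (m:ℤ) = L + 2*m by ring] at p2
    rw [show L + 2*(m:ℤ) + (m:ℤ) = L + 3*m by ring] at p3
    rw [show L + 3*(m:ℤ) + (m:ℤ) = L + 4*m by ring] at p4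
    linarith [e1, e2, e3, p1, p2, p3, p4]
  have hgsum := g_sum_bound q (by omega)
  calc ‖R‖^2 ≤ ∑ h ∈ D, ‖T h‖ := hnormsq
    _ ≤ ∑ h ∈ Finset.Ico L (L + 4*(m:ℤ)), B h := step_sum
    _ ≤ 4 * ((q:ℝ) + ∑ v ∈ Finset.Ico (1:ℤ) (q:ℤ), gfun v) := four_pieces
    _ ≤ 4 * ((q:ℝ) + (q:ℝ) * (1 + Real.log q)) := by
        have : ∑ v ∈ Finset.Ico (1:ℤ) (q:ℤ), gfun v ≤ (q:ℝ) * (1 + Real.log q) := hgsum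
        linarith
    _ ≤ 8*(q:ℝ) + 4*(q:ℝ)*(1 + Real.log q) := by linarith

/-- Norm of the complete Gauss sum. -/
lemma gauss_norm {q : ℕ} {a b : ℤ} (hq : 0 < q) (hq4 : q % 4 = 0) (ha : Int.gcd a (q:ℤ) = 1)
    (hb : b % 2 = 0) :
    ‖∑ ℓ ∈ Finset.Ico 0 (q:ℤ), f q a b ℓ‖ = Real.sqrt (2*q) := by
  have h := gauss_conj_mul q hq hq4 ha hb
  have h2 : ‖∑ ℓ ∈ Finset.Ico 0 (q:ℤ), f q a b ℓ‖^2 = 2*(q:ℝ) := by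
    have e1 : ‖∑ ℓ ∈ Finset.Ico 0 (q:ℤ), f q a b ℓ‖^2
        = ‖(starRingEnd ℂ) (∑ ℓ ∈ Finset.Ico 0 (q:ℤ), f q a b ℓ)
            * (∑ ℓ ∈ Finset.Ico 0 (q:ℤ), f q a b ℓ)‖ := by
      rw [norm_mul, RCLike.norm_conj, sq]
    rw [e1, h, norm_mul]
    simp
  rw [← h2, Real.sqrt_sq (norm_nonneg _)]

/-- Complete blocks sum. -/
lemma block_sum {q : ℕ} {a b : ℤ} (A : ℤ) (k : ℕ) :
    ∑ ℓ ∈ Finset.Ico A (A + (k:ℤ)*(q:ℤ)), f q a b ℓ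
      = (k:ℂ) * ∑ ℓ ∈ Finset.Ico 0 (q:ℤ), f q a b ℓ := by
  induction k with
  | zero => simp
  | succ k ih =>
    have hkq : (0:ℤ) ≤ (k:ℤ)*(q:ℤ) := by positivity
    have e := sum_Ico_split (a := A) (b := A + (k:ℤ)*(q:ℤ)) (c := A + ((k:ℤ)+1)*(q:ℤ))
      (f q a b) (by omega) (by nlinarith)
    have ewin : ∑ ℓ ∈ Finset.Ico (A + (k:ℤ)*(q:ℤ)) (A + ((k:ℤ)+1)*(q:ℤ)), f q a b ℓ
        = ∑ ℓ ∈ Finset.Ico 0 (q:ℤ), f q a b ℓ := by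
      have := periodic_window_sum q (f q a b) (f_periodic q a b) (A + (k:ℤ)*(q:ℤ))
      rwa [show A + (k:ℤ)*(q:ℤ) + (q:ℤ) = A + ((k:ℤ)+1)*(q:ℤ) by ring] at this
    rw [show ((k+1:ℕ):ℤ) = (k:ℤ)+1 by push_cast; ring, e, ih, ewin]
    push_cast
    ring

end IGS


/-- Incomplete Gauss sum approximation: there is an absolute constant `C > 0` such that
for `q ≡ 0 (mod 4)`, `gcd(a₁,q) = 1` and `b` even, the incomplete quadratic exponential
sum `S̃(u) = ∑_{u₀ ≤ ℓ < u} e^{i(ℓ·2πb/q + ℓ²·2πa₁/q)}` satisfies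
`||S̃(u)| - √2 (u-u₀)/√q| ≤ C √q (log q)^{1/2}`. -/
theorem incomplete_gauss_sum_approximation :
    ∃ C : ℝ, 0 < C ∧ ∀ q : ℕ, 0 < q → q % 4 = 0 →
      ∀ a₁ : ℤ, Int.gcd a₁ (q : ℤ) = 1 → ∀ b : ℤ, b % 2 = 0 →
      ∀ u₀ u : ℝ, u₀ ≤ u →
      |‖∑ ℓ ∈ Finset.Ico ⌈u₀⌉ ⌈u⌉,
            Complex.exp (Complex.I *
              ((((ℓ : ℝ) * (2 * Real.pi * (b : ℝ) / (q : ℝ)) +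
                  (ℓ : ℝ) ^ 2 * (2 * Real.pi * (a₁ : ℝ) / (q : ℝ)) : ℝ)) : ℂ))‖
          - Real.sqrt 2 * (u - u₀) / Real.sqrt (q : ℝ)|
        ≤ C * Real.sqrt (q : ℝ) * Real.sqrt (Real.log (q : ℝ)) := by
  refine ⟨7, by norm_num, ?_⟩
  intro q hq hq4 a ha b hb u₀ u huu
  have hq4' : 4 ≤ q := by omega
  have hq' : (0:ℝ) < q := by exact_mod_cast hq
  have hq4'' : (4:ℝ) ≤ q := by exact_mod_cast hq4'
  have hlog1 : 1 ≤ Real.log q := by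
    rw [Real.le_log_iff_exp_le hq']
    have h1 : Real.exp 1 < 2.7182818286 := Real.exp_one_lt_d9
    linarith
  have hsqlog1 : 1 ≤ Real.sqrt (Real.log q) := by
    rw [show (1:ℝ) = Real.sqrt 1 from (Real.sqrt_one).symm]
    exact Real.sqrt_le_sqrt hlog1
  have hsq_pos : 0 < Real.sqrt q := Real.sqrt_pos.2 hq'
  set A : ℤ := ⌈u₀⌉ with hA
  have hAB : A ≤ ⌈u⌉ := Int.ceil_mono huu
  set N : ℕ := (⌈u⌉ - A).toNat with hN
  have hceil : ⌈u⌉ = A + (N:ℤ) := by omega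
  -- rewrite the sum
  have hsum : ∑ ℓ ∈ Finset.Ico A (A + (N:ℤ)),
      Complex.exp (Complex.I *
        ((((ℓ : ℝ) * (2 * Real.pi * (b : ℝ) / (q : ℝ)) +
            (ℓ : ℝ) ^ 2 * (2 * Real.pi * (a : ℝ) / (q : ℝ)) : ℝ)) : ℂ))
      = ∑ ℓ ∈ Finset.Ico A (A + (N:ℤ)), IGS.f q a b ℓ := by
    refine Finset.sum_congr rfl fun ℓ _ => ?_
    rw [IGS.f, IGS.P, IGS.ψ]
    congr 1
    push_cast
    field_simp
    ring
  rw [hceil, hsum]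
  -- block decomposition
  set kk : ℕ := N / q with hkk
  set r : ℕ := N % q with hr
  set M : ℕ := kk * q with hM
  have hMN : M + r = N := by rw [hM, hkk, hr, mul_comm]; exact Nat.div_add_mod N q
  have hrq : r < q := Nat.mod_lt _ hq
  set G : ℂ := ∑ ℓ ∈ Finset.Ico 0 (q:ℤ), IGS.f q a b ℓ with hG
  have esplit := IGS.sum_Ico_split (a := A) (b := A + (M:ℤ)) (c := A + (N:ℤ))
    (IGS.f q a b) (by omega) (by omega)
  have hblock : ∑ ℓ ∈ Finset.Ico A (A + (M:ℤ)), IGS.f q a b ℓ = (kk:ℂ) * G := by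
    rw [show ((M:ℕ):ℤ) = (kk:ℤ)*(q:ℤ) by rw [hM]; push_cast; ring]
    exact IGS.block_sum A kk
  set R : ℂ := ∑ ℓ ∈ Finset.Ico (A + (M:ℤ)) (A + (N:ℤ)), IGS.f q a b ℓ with hR
  have hRsum : ∑ ℓ ∈ Finset.Ico A (A + (N:ℤ)), IGS.f q a b ℓ = (kk:ℂ) * G + R := by
    rw [esplit, hblock]
  -- Weyl bound on R
  have hRbound : ‖R‖ ≤ 4 * Real.sqrt q * Real.sqrt (Real.log q) := by
    have hw := IGS.weyl_bound (a := a) (b := b) hq hq4 ha (A + (M:ℤ)) r hrq.le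
    have hR' : R = ∑ ℓ ∈ Finset.Ico (A + (M:ℤ)) ((A + (M:ℤ)) + (r:ℤ)), IGS.f q a b ℓ := by
      rw [hR, show (A + (M:ℤ)) + (r:ℤ) = A + (N:ℤ) by omega]
    have h1 : ‖R‖^2 ≤ 8*(q:ℝ) + 4*(q:ℝ)*(1 + Real.log q) := by rw [hR']; exact hw
    have h2 : 8*(q:ℝ) + 4*(q:ℝ)*(1 + Real.log q) ≤ 16 * ((q:ℝ) * Real.log q) := by nlinarith
    have h3 : ‖R‖ ≤ Real.sqrt (16 * ((q:ℝ) * Real.log q)) := by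
      rw [show ‖R‖ = Real.sqrt (‖R‖^2) from (Real.sqrt_sq (norm_nonneg _)).symm]
      exact Real.sqrt_le_sqrt (h1.trans h2)
    refine h3.trans_eq ?_
    rw [Real.sqrt_mul (by norm_num) _, Real.sqrt_mul hq'.le,
      show (16:ℝ) = 4^2 by norm_num, Real.sqrt_sq (by norm_num)]
    ring
  -- norm of block part
  have hGnorm : ‖(kk:ℂ) * G‖ = (kk:ℝ) * Real.sqrt (2*q) := by
    rw [norm_mul, hG, IGS.gauss_norm hq hq4 ha hb, Complex.norm_natCast]
  -- comparison of main terms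
  have hmain : |(kk:ℝ) * Real.sqrt (2*q) - Real.sqrt 2 * (u - u₀) / Real.sqrt q|
      ≤ 3 * Real.sqrt q * Real.sqrt (Real.log q) := by
    have hsqrt2q : Real.sqrt (2*q) = Real.sqrt 2 * Real.sqrt q :=
      Real.sqrt_mul (by norm_num) _
    have hdivsq : (q:ℝ) / Real.sqrt q = Real.sqrt q := Real.div_sqrt
    have hexp : (kk:ℝ) * Real.sqrt (2*q) = Real.sqrt 2 * ((kk:ℝ)*q) / Real.sqrt q := by
      rw [hsqrt2q]
      rw [show Real.sqrt 2 * ((kk:ℝ)*q) / Real.sqrt q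
          = Real.sqrt 2 * (kk:ℝ) * ((q:ℝ) / Real.sqrt q) by ring, hdivsq]
      ring
    rw [hexp, show Real.sqrt 2 * ((kk:ℝ)*q) / Real.sqrt q - Real.sqrt 2 * (u - u₀) / Real.sqrt q
        = Real.sqrt 2 * (((kk:ℝ)*q) - (u - u₀)) / Real.sqrt q by ring]
    rw [abs_div, abs_mul, abs_of_nonneg (Real.sqrt_nonneg 2), abs_of_nonneg hsq_pos.le]
    -- |kk*q - (u-u₀)| ≤ q
    have hceil1 : (u:ℝ) ≤ (⌈u⌉:ℝ) := Int.le_ceil u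
    have hceil2 : ((⌈u⌉:ℤ):ℝ) < u + 1 := Int.ceil_lt_add_one u
    have hceil3 : (u₀:ℝ) ≤ ((A:ℤ):ℝ) := Int.le_ceil u₀
    have hceil4 : ((A:ℤ):ℝ) < u₀ + 1 := Int.ceil_lt_add_one u₀
    have hNe : ((N:ℕ):ℝ) = ((⌈u⌉:ℤ):ℝ) - ((A:ℤ):ℝ) := by
      rw [hceil]; push_cast; ring
    have hNd : |((N:ℕ):ℝ) - (u - u₀)| ≤ 1 := by
      rw [hNe, abs_le]
      constructor <;> linarith
    have hkkq : ((kk:ℝ)*q) = ((N:ℕ):ℝ) - (r:ℕ) := by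
      have : ((M:ℕ):ℝ) = (kk:ℝ)*q := by rw [hM]; push_cast; ring
      rw [← this]
      have : ((M:ℕ):ℝ) + r = N := by exact_mod_cast hMN
      linarith
    have habs : |((kk:ℝ)*q) - (u - u₀)| ≤ (q:ℝ) := by
      rw [hkkq]
      have hr' : (r:ℝ) ≤ (q:ℝ) - 1 := by
        have : (r:ℕ) ≤ q - 1 := by omega
        have h2 : ((r:ℕ):ℝ) ≤ ((q-1:ℕ):ℝ) := Nat.cast_le.2 this
        have h3 : ((q-1:ℕ):ℝ) = (q:ℝ) - 1 := by
          have : (1:ℕ) ≤ q := hq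
          push_cast [Nat.cast_sub this]
          ring
        linarith
      have hr0 : (0:ℝ) ≤ (r:ℕ) := Nat.cast_nonneg r
      rw [abs_le] at hNd ⊢
      constructor <;> linarith
    have hsqrt2le : Real.sqrt 2 ≤ (3:ℝ)/2 := by
      rw [show (3:ℝ)/2 = Real.sqrt ((3/2)^2) from (Real.sqrt_sq (by norm_num)).symm]
      exact Real.sqrt_le_sqrt (by norm_num)
    calc Real.sqrt 2 * |((kk:ℝ)*q) - (u - u₀)| / Real.sqrt q
        ≤ Real.sqrt 2 * (q:ℝ) / Real.sqrt q := by
          apply div_le_div_of_nonneg_right (c := Real.sqrt q) _ hsq_pos.le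
          exact mul_le_mul_of_nonneg_left habs (Real.sqrt_nonneg 2)
      _ = Real.sqrt 2 * Real.sqrt q := by
          rw [show Real.sqrt 2 * (q:ℝ) / Real.sqrt q
            = Real.sqrt 2 * ((q:ℝ) / Real.sqrt q) by ring, hdivsq]
      _ ≤ 3 * Real.sqrt q * Real.sqrt (Real.log q) := by
          nlinarith [Real.sqrt_nonneg q, hsqlog1, hsqrt2le, hsq_pos]
  -- triangle inequality finish
  have htri : |‖(kk:ℂ) * G + R‖ - Real.sqrt 2 * (u - u₀) / Real.sqrt q|
      ≤ ‖R‖ + |(kk:ℝ) * Real.sqrt (2*q) - Real.sqrt 2 * (u - u₀) / Real.sqrt q| := by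
    have h1 : |‖(kk:ℂ) * G + R‖ - ‖(kk:ℂ) * G‖| ≤ ‖R‖ := by
      have := abs_norm_sub_norm_le ((kk:ℂ) * G + R) ((kk:ℂ) * G)
      simpa using this
    rw [hGnorm] at h1
    calc |‖(kk:ℂ) * G + R‖ - Real.sqrt 2 * (u - u₀) / Real.sqrt q|
        ≤ |‖(kk:ℂ) * G + R‖ - (kk:ℝ) * Real.sqrt (2*q)|
          + |(kk:ℝ) * Real.sqrt (2*q) - Real.sqrt 2 * (u - u₀) / Real.sqrt q| := by
          have := abs_sub_abs_le_abs_sub (0:ℝ) (0:ℝ)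
          exact abs_sub_le _ _ _
      _ ≤ ‖R‖ + |(kk:ℝ) * Real.sqrt (2*q) - Real.sqrt 2 * (u - u₀) / Real.sqrt q| := by
          linarith [h1]
  rw [hRsum]
  calc |‖(kk:ℂ) * G + R‖ - Real.sqrt 2 * (u - u₀) / Real.sqrt q|
      ≤ ‖R‖ + |(kk:ℝ) * Real.sqrt (2*q) - Real.sqrt 2 * (u - u₀) / Real.sqrt q| := htri
    _ ≤ 4 * Real.sqrt q * Real.sqrt (Real.log q) + 3 * Real.sqrt q * Real.sqrt (Real.log q) := by
        linarith [hRbound, hmain]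
    _ = 7 * Real.sqrt q * Real.sqrt (Real.log q) := by ring
end
end
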